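/- Let X be a finite indecomposable crossed set with profile 1^{a_1} 2^{a_2} ... k^{a_k} (i.e., for each x ∈ X the permutation φ_x has a_j disjoint cycles of length j). Let k_2 be the number of points fixed by φ_u other than u itself, and k_2' the number of points moved by φ_u, for some (any) u ∈ X. Then k_2 ≤ (Σ_{j≥2} a_j)(k_2' − 2) and |X| ≤ (Σ_{j≥2} a_j)(k_2' − 2) + k_2' + 1. -/

import Mathlib

/-- A rack structure on a set `X`: a binary operation `act` such that each left
translation is bijective and `act` is self-distributive. -/
structure RackStr (X : Type*) where
  act : X → X → X
  bij : ∀ x, Function.Bijective (act x)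
  self_distrib : ∀ x y z, act x (act y z) = act (act x y) (act x z)

namespace RackStr

variable {X : Type*}

/-- A quandle is a rack with `x ▷ x = x`. -/
def IsQuandle (R : RackStr X) : Prop := ∀ x, R.act x x = x

/-- A crossed set is a quandle in which `x ▷ y = y ↔ y ▷ x = x`. -/
def IsCrossed (R : RackStr X) : Prop :=
  R.IsQuandle ∧ ∀ x y, R.act x y = y ↔ R.act y x = x

/-- The left translation `φ_x` as a permutation. -/
noncomputable def perm (R : RackStr X) (x : X) : Equiv.Perm X :=
  Equiv.ofBijective (R.act x) (R.bij x)

/-- A rack is indecomposable if its inner group (generated by the `φ_x`)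
acts transitively. -/
def Indecomposable (R : RackStr X) : Prop :=
  ∀ x y : X, ∃ π ∈ Subgroup.closure (Set.range R.perm), π x = y

end RackStr

/-!
Every `φ_x` is conjugate to `φ_u` in the inner group, so all supports have `k₂'` elements;
if `φ_u = 1` this forces `X = {u}`. Otherwise the set of `w` with `supp φ_w` disjoint from
`supp φ_u` is invariant under the inner group and misses `u`, so by transitivity it is empty.
If `y ≠ u` is fixed by `φ_u`, then `y ▷ u = u`, so `φ_y` commutes with `φ_u`; its support meets
`supp φ_u`, hence contains a whole cycle of `φ_u`. By the crossed-set axiom `y` is then moved by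
`φ_z` for every `z` in that cycle. Fixing one such `z`, `supp φ_z` also contains `u` and a point
of `supp φ_u`, so each of the `c` cycles accounts for at most `k₂' - 2` of the `k₂` points;
finally `|X| = 1 + k₂ + k₂'`.
-/

open Finset
open scoped Pointwise

namespace Equiv.Perm

variable {α : Type*} [Fintype α] [DecidableEq α]

lemma SameCycle.mem_support_iff_of_commute {σ τ : Perm α} (hστ : Commute τ σ) {x y : α}
    (h : σ.SameCycle x y) : x ∈ τ.support ↔ y ∈ τ.support := by
  obtain ⟨k, rfl⟩ := h
  rw [mem_support, mem_support, ← mul_apply, (hστ.zpow_right k).eq, mul_apply,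
    (σ ^ k).injective.ne_iff]

lemma support_cycleOf_subset_of_commute {σ τ : Perm α} (hστ : Commute τ σ) {x : α}
    (hx : x ∈ τ.support) : (σ.cycleOf x).support ⊆ τ.support := fun _ hy =>
  ((mem_support_cycleOf_iff.1 hy).1.mem_support_iff_of_commute hστ).1 hx

end Equiv.Perm

namespace RackStr

variable {X : Type*} (R : RackStr X)

@[simp]
lemma perm_apply (x y : X) : R.perm x y = R.act x y := rfl

lemma perm_act (x y : X) : R.perm (R.act x y) = R.perm x * R.perm y * (R.perm x)⁻¹ := by
  ext z
  have hz : R.act x ((R.perm x).symm z) = z := (R.perm x).apply_symm_apply z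
  simp only [Equiv.Perm.coe_mul, Equiv.Perm.coe_inv, Function.comp_apply, perm_apply]
  rw [R.self_distrib, hz]

lemma perm_apply_of_mem_closure {π : Equiv.Perm X}
    (hπ : π ∈ Subgroup.closure (Set.range R.perm)) (x : X) :
    R.perm (π x) = π * R.perm x * π⁻¹ := by
  induction hπ using Subgroup.closure_induction generalizing x with
  | mem g hg =>
    obtain ⟨w, rfl⟩ := hg
    exact R.perm_act w x
  | one => simp
  | mul a b _ _ ha hb =>
    rw [Equiv.Perm.mul_apply, ha, hb]
    group
  | inv a _ ha =>
    have h := ha (a⁻¹ x)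
    rw [← Equiv.Perm.mul_apply, mul_inv_cancel, Equiv.Perm.one_apply] at h
    rw [h]
    group

lemma commute_perm_of_act_eq {x y : X} (h : R.act y x = x) : Commute (R.perm y) (R.perm x) := by
  have hconj := R.perm_act y x
  rw [h] at hconj
  exact (eq_mul_inv_iff_mul_eq.mp hconj).symm

lemma eq_univ_of_act_mem [Finite X] (hind : R.Indecomposable) {S : Set X} (hS : S.Nonempty)
    (hact : ∀ g, ∀ w ∈ S, R.act g w ∈ S) : S = Set.univ := by
  have hstab : Subgroup.closure (Set.range R.perm) ≤ MulAction.stabilizer _ S := by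
    rw [Subgroup.closure_le]
    rintro _ ⟨g, rfl⟩
    exact (MulAction.mem_stabilizer_set' S.toFinite).2 (hact g)
  obtain ⟨x, hx⟩ := hS
  refine Set.eq_univ_of_forall fun y => ?_
  obtain ⟨π, hπ, rfl⟩ := hind x y
  exact (MulAction.mem_stabilizer_set.1 (hstab hπ) x).2 hx

lemma subsingleton_of_perm_eq_one [Finite X] (hind : R.Indecomposable) {u : X}
    (hu : R.perm u = 1) : Subsingleton X := by
  have hone : ∀ g, R.perm g = 1 := fun g => by
    obtain ⟨π, hπ, rfl⟩ := hind u g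
    rw [R.perm_apply_of_mem_closure hπ, hu, mul_one, mul_inv_cancel]
  refine ⟨fun x y => ?_⟩
  have hx := R.eq_univ_of_act_mem hind (Set.singleton_nonempty x) fun g w hw => by
    rw [← perm_apply, hone g]
    exact hw
  exact ((Set.eq_univ_iff_forall.1 hx) y).symm

variable [Fintype X] [DecidableEq X]

lemma card_support_perm_eq (hind : R.Indecomposable) (x y : X) :
    #(R.perm x).support = #(R.perm y).support := by
  obtain ⟨π, hπ, rfl⟩ := hind y x
  rw [R.perm_apply_of_mem_closure hπ, Equiv.Perm.support_conj, card_map]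

variable {R}

namespace IsQuandle

lemma card_eq_fixed_add_moved_add_one (hq : R.IsQuandle) (u : X) :
    Fintype.card X = #{y | R.act u y = y ∧ y ≠ u} + #{y | R.act u y ≠ y} + 1 := by
  have hfix : (univ.filter fun y => R.act u y = y : Finset X) =
      insert u (univ.filter fun y => R.act u y = y ∧ y ≠ u) := by
    ext y
    by_cases hy : y = u
    · simp [hy, hq u]
    · simp [hy]
  rw [← card_univ, ← card_filter_add_card_filter_not (fun y => R.act u y = y), hfix,
    card_insert_of_notMem (by simp)]
  simp only [ne_eq]
  omega

end IsQuandle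

namespace IsCrossed

lemma mem_support_perm_comm (hc : R.IsCrossed) {x y : X} :
    x ∈ (R.perm y).support ↔ y ∈ (R.perm x).support := by
  simp only [Equiv.Perm.mem_support, perm_apply, ne_eq, hc.2 y x]

lemma not_disjoint_support_perm (hc : R.IsCrossed) (hind : R.Indecomposable) {u : X}
    (hu : R.perm u ≠ 1) (x : X) : ¬ Disjoint (R.perm x).support (R.perm u).support := by
  intro hx
  set S := {w | Disjoint (R.perm w).support (R.perm u).support}
  have hS : ∀ g, ∀ w ∈ S, R.act g w ∈ S := by
    intro g w hw
    by_cases hg : g ∈ (R.perm u).support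
    · have hwg : w ∉ (R.perm g).support := fun h =>
        disjoint_left.1 hw (hc.mem_support_perm_comm.1 h) hg
      rwa [← perm_apply, Equiv.Perm.notMem_support.1 hwg]
    · -- `φ_g` commutes with `φ_u`, so it maps `supp φ_u` onto itself
      have hcomm := R.commute_perm_of_act_eq ((hc.2 u g).1 (Equiv.Perm.notMem_support.1 hg))
      have hsupp := Equiv.Perm.support_conj (σ := R.perm g) (τ := R.perm u)
      rw [hcomm.eq, mul_inv_cancel_right] at hsupp
      change Disjoint _ _
      rw [R.perm_act, Equiv.Perm.support_conj, hsupp, disjoint_map]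
      exact hw
  have huS : u ∈ S := (R.eq_univ_of_act_mem hind ⟨x, hx⟩ hS).symm ▸ Set.mem_univ u
  exact hu (Equiv.Perm.support_eq_empty_iff.1 (disjoint_self.1 huS))

lemma exists_cycleFactor_support_subset (hc : R.IsCrossed) (hind : R.Indecomposable) {u : X}
    (hu : R.perm u ≠ 1) {y : X} (hy : R.act u y = y) :
    ∃ g ∈ (R.perm u).cycleFactorsFinset, g.support ⊆ (R.perm y).support := by
  obtain ⟨m, hmy, hmu⟩ := not_disjoint_iff.1 (hc.not_disjoint_support_perm hind hu y)
  exact ⟨_, Equiv.Perm.cycleOf_mem_cycleFactorsFinset_iff.2 hmu,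
    Equiv.Perm.support_cycleOf_subset_of_commute
      (R.commute_perm_of_act_eq ((hc.2 u y).1 hy)) hmy⟩

lemma card_fixed_ne_cycleFactor_subset_le (hc : R.IsCrossed) (hind : R.Indecomposable) {u : X}
    {g : Equiv.Perm X} (hg : g ∈ (R.perm u).cycleFactorsFinset) :
    #{y | (R.act u y = y ∧ y ≠ u) ∧ g.support ⊆ (R.perm y).support} ≤
      #(R.perm u).support - 2 := by
  obtain ⟨z, hzg⟩ := (Equiv.Perm.mem_cycleFactorsFinset_iff.1 hg).1.nonempty_support
  have hzu : z ∈ (R.perm u).support := Equiv.Perm.mem_cycleFactorsFinset_support_le hg hzg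
  have hu : R.perm u ≠ 1 := fun h => by simp [h] at hzu
  obtain ⟨m, hmz, hmu⟩ := not_disjoint_iff.1 (hc.not_disjoint_support_perm hind hu z)
  have hum : u ≠ m := by
    rintro rfl
    exact Equiv.Perm.mem_support.1 hmu (hc.1 u)
  have hpair : {u, m} ⊆ (R.perm z).support :=
    insert_subset (hc.mem_support_perm_comm.1 hzu) (singleton_subset_iff.2 hmz)
  have hsub :
      ({y | (R.act u y = y ∧ y ≠ u) ∧ g.support ⊆ (R.perm y).support} : Finset X) ⊆
        (R.perm z).support \ {u, m} := by
    intro y hy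
    obtain ⟨⟨hyfix, hyu⟩, hgy⟩ := (mem_filter.1 hy).2
    refine mem_sdiff.2 ⟨hc.mem_support_perm_comm.1 (hgy hzg), ?_⟩
    rw [mem_insert, mem_singleton]
    rintro (rfl | rfl)
    · exact hyu rfl
    · exact Equiv.Perm.mem_support.1 hmu hyfix
  calc _ ≤ #((R.perm z).support \ {u, m}) := card_le_card hsub
    _ = #(R.perm u).support - 2 := by
      rw [card_sdiff_of_subset hpair, card_pair hum, R.card_support_perm_eq hind]

lemma card_fixed_ne_le (hc : R.IsCrossed) (hind : R.Indecomposable) (u : X) :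
    #{y | R.act u y = y ∧ y ≠ u} ≤
      Multiset.card (R.perm u).cycleType * (#(R.perm u).support - 2) := by
  by_cases hu : R.perm u = 1
  · have := R.subsingleton_of_perm_eq_one hind hu
    simp [Subsingleton.elim _ u]
  have hcover : ({y | R.act u y = y ∧ y ≠ u} : Finset X) ⊆
      (R.perm u).cycleFactorsFinset.biUnion fun g =>
        {y | (R.act u y = y ∧ y ≠ u) ∧ g.support ⊆ (R.perm y).support} := by
    intro y hy
    have hy' := (mem_filter.1 hy).2
    obtain ⟨g, hg, hgy⟩ := hc.exists_cycleFactor_support_subset hind hu hy'.1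
    exact mem_biUnion.2 ⟨g, hg, mem_filter.2 ⟨mem_univ y, hy', hgy⟩⟩
  calc _ ≤ _ := card_le_card hcover
    _ ≤ _ := card_biUnion_le
    _ ≤ ∑ _g ∈ (R.perm u).cycleFactorsFinset, (#(R.perm u).support - 2) :=
      sum_le_sum fun _ hg => hc.card_fixed_ne_cycleFactor_subset_le hind hg
    _ = _ := by
      rw [sum_const, smul_eq_mul, Equiv.Perm.cycleType_def, Multiset.card_map]
      rfl

end IsCrossed

end RackStr

/-- size bounds for indecomposable crossed sets in terms of the
profile. Here `k2` is the number of fixed points of `φ_u` other than `u`,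
`k2'` the number of moved points, and `c = Σ_{j≥2} a_j` is the total number of
nontrivial cycles of `φ_u` (the cardinality of its cycle type). Then
`k2 ≤ c * (k2' − 2)` and `|X| ≤ c * (k2' − 2) + k2' + 1`. -/
theorem size_of_racks {X : Type*} [Fintype X] [DecidableEq X] (R : RackStr X)
    (hc : R.IsCrossed) (hind : R.Indecomposable) (u : X)
    (k2 k2' c : ℕ)
    (hk2 : k2 = (Finset.univ.filter fun y : X => R.act u y = y ∧ y ≠ u).card)
    (hk2' : k2' = (Finset.univ.filter fun y : X => R.act u y ≠ y).card)
    (hcyc : c = Multiset.card (R.perm u).cycleType) :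
    k2 ≤ c * (k2' - 2) ∧ Fintype.card X ≤ c * (k2' - 2) + k2' + 1 := by
  have hsupp : (R.perm u).support = univ.filter fun y => R.act u y ≠ y := rfl
  have hbound := hc.card_fixed_ne_le hind u
  rw [hsupp, ← hk2, ← hk2', ← hcyc] at hbound
  have hcard := hc.1.card_eq_fixed_add_moved_add_one u
  rw [← hk2, ← hk2'] at hcard
  omega
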